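/- Let G be a connected countable graph and U ⊆ V(G) infinite. Then G contains at least one of: (1) a U-comb; (2) a 2-star with all leaves in U; (3) a finite vertex set dominating U. -/

import Mathlib

/-- A ray in `G`: a one-way infinite path, given by an injective sequence of
successively adjacent vertices. -/
def IsRay {α : Type*} (G : SimpleGraph α) (r : ℕ → α) : Prop :=
  Function.Injective r ∧ ∀ n, G.Adj (r n) (r (n + 1))

/-- The set of vertices of a walk. -/
def walkVerts {α : Type*} {G : SimpleGraph α} {a b : α} (p : G.Walk a b) : Set α :=
  {x | x ∈ p.support}

/-- A `U`-star in `G`: a subdivision of the infinite star `K_{1,ω}` all of whose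
leaves lie in `U`, i.e. a centre `c` together with infinitely many paths from `c`
to distinct vertices of `U`, any two of which meet exactly in `c`. -/
def HasUStar {α : Type*} (G : SimpleGraph α) (U : Set α) : Prop :=
  ∃ (c : α) (u : ℕ → α) (P : ∀ n, G.Walk c (u n)),
    Function.Injective u ∧ (∀ n, u n ∈ U) ∧ (∀ n, u n ≠ c) ∧
    (∀ n, (P n).IsPath) ∧
    ∀ m n, m ≠ n → walkVerts (P m) ∩ walkVerts (P n) = {c}

/-- A `U`-comb in `G`: the union of a ray `r` with infinitely many pairwise
disjoint (possibly trivial) paths from `U` to the ray, each meeting the ray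
exactly in its last vertex. -/
def HasUComb {α : Type*} (G : SimpleGraph α) (U : Set α) : Prop :=
  ∃ r : ℕ → α, IsRay G r ∧
    ∃ (a b : ℕ → α) (P : ∀ n, G.Walk (a n) (b n)),
      (∀ n, a n ∈ U) ∧ (∀ n, b n ∈ Set.range r) ∧ (∀ n, (P n).IsPath) ∧
      (∀ n, walkVerts (P n) ∩ Set.range r = {b n}) ∧
      ∀ m n, m ≠ n → Disjoint (walkVerts (P m)) (walkVerts (P n))

/-- A 2-star with all leaves in `U`: obtained from `K_{1,ω}` by subdividing every
edge at least once, i.e. infinitely many paths of length at least 2 from a common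
centre `c` to distinct vertices of `U`, any two meeting exactly in `c`. -/
def HasTwoStar {α : Type*} (G : SimpleGraph α) (U : Set α) : Prop :=
  ∃ (c : α) (u : ℕ → α) (P : ∀ n, G.Walk c (u n)),
    Function.Injective u ∧ (∀ n, u n ∈ U) ∧ (∀ n, (P n).IsPath) ∧
    (∀ n, 2 ≤ (P n).length) ∧
    ∀ m n, m ≠ n → walkVerts (P m) ∩ walkVerts (P n) = {c}

/-- `D` dominates `U` in `G`: every vertex of `U` lies in `D` or has a
neighbour in `D`. -/
def Dominates {α : Type*} (G : SimpleGraph α) (D U : Set α) : Prop :=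
  ∀ u ∈ U, u ∈ D ∨ ∃ d ∈ D, G.Adj d u

/-!
Suppose no finite set dominates `U`. Starting from a single vertex, grow a tree in `G` by
repeatedly attaching a path from the current finite tree to a vertex of `U` that the tree does not
dominate. Such a path meets the tree only in its first vertex and has length at least 2, so its
last vertex is a leaf of `U` whose parent is a new vertex; distinct leaves have distinct parents.

If some vertex has infinitely many children with a leaf strictly below them, the tree paths from
it to one such leaf per child form a 2-star. Otherwise each vertex has only finitely many children
with leaves below them, and König's lemma gives a ray each of whose vertices has infinitely many
leaves below it. Infinitely many vertices of the ray are the last vertex of the ray above some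
leaf, and the tree paths from those leaves down to the ray are the teeth of a comb.
-/

open SimpleGraph

lemma SimpleGraph.Walk.two_le_length {α : Type*} {G : SimpleGraph α} {u v : α} (p : G.Walk u v)
    (hne : u ≠ v) (hadj : ¬G.Adj u v) : 2 ≤ p.length := by
  by_contra! h
  interval_cases hp : p.length
  · exact hne (Walk.eq_of_length_eq_zero hp)
  · exact hadj (Walk.adj_of_length_eq_one hp)

lemma walkVerts_reverse {α : Type*} {G : SimpleGraph α} {a b : α} (p : G.Walk a b) :
    walkVerts p.reverse = walkVerts p := by
  ext x
  simp [walkVerts, Walk.support_reverse]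

lemma SimpleGraph.Walk.IsPath.exists_isPath_tail_disjoint {α : Type*} {G : SimpleGraph α}
    {S : Set α} {v u : α} {p : G.Walk v u} (hp : p.IsPath) (hu : u ∉ S)
    (hS : ∃ x ∈ p.support, x ∈ S) :
    ∃ a ∈ S, ∃ q : G.Walk a u, q.IsPath ∧ ∀ y ∈ q.support.tail, y ∉ S := by
  induction p with
  | nil =>
    obtain ⟨x, hx, hxS⟩ := hS
    exact absurd ((List.mem_singleton.1 hx) ▸ hxS) hu
  | @cons v w u hvw p ih =>
    rw [Walk.cons_isPath_iff] at hp
    by_cases hS' : ∃ x ∈ p.support, x ∈ S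
    · exact ih hp.1 hu hS'
    push Not at hS'
    obtain ⟨x, hx, hxS⟩ := hS
    have hv : v ∈ S := by
      rcases List.mem_cons.1 (Walk.support_cons _ _ ▸ hx) with rfl | hx
      · exact hxS
      · exact absurd hxS (hS' x hx)
    exact ⟨v, hv, .cons hvw p, (Walk.cons_isPath_iff _ _).2 hp, by simpa using hS'⟩

section Map

variable {α β : Type*} {H : SimpleGraph β} {G : SimpleGraph α} {f : H →g G}

lemma walkVerts_map {a b : β} (p : H.Walk a b) : walkVerts (p.map f) = f '' walkVerts p := by
  ext x
  simp [walkVerts, Walk.support_map]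

lemma IsRay.map (hf : Function.Injective f) {r : ℕ → β} (hr : IsRay H r) : IsRay G (f ∘ r) :=
  ⟨hf.comp hr.1, fun n => f.map_adj (hr.2 n)⟩

lemma HasUComb.map (hf : Function.Injective f) {U : Set β} {U' : Set α} (hU : Set.MapsTo f U U')
    (h : HasUComb H U) : HasUComb G U' := by
  obtain ⟨r, hr, a, b, P, ha, hb, hP, hmeet, hdisj⟩ := h
  refine ⟨f ∘ r, hr.map hf, f ∘ a, f ∘ b, fun n => (P n).map f, fun n => hU (ha n),
    fun n => Set.range_comp f r ▸ Set.mem_image_of_mem f (hb n), fun n => (hP n).map hf,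
    fun n => ?_, fun m n hmn => ?_⟩
  · rw [walkVerts_map, Set.range_comp, ← Set.image_inter hf, hmeet, Set.image_singleton]
    rfl
  · rw [walkVerts_map, walkVerts_map, Set.disjoint_image_iff hf]
    exact hdisj m n hmn

lemma HasTwoStar.map (hf : Function.Injective f) {U : Set β} {U' : Set α} (hU : Set.MapsTo f U U')
    (h : HasTwoStar H U) : HasTwoStar G U' := by
  obtain ⟨c, u, P, hu, huU, hP, hlen, hmeet⟩ := h
  refine ⟨f c, f ∘ u, fun n => (P n).map f, hf.comp hu, fun n => hU (huU n),
    fun n => (hP n).map hf, fun n => (Walk.length_map f _).symm ▸ hlen n, fun m n hmn => ?_⟩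
  rw [walkVerts_map, walkVerts_map, ← Set.image_inter hf, hmeet m n hmn, Set.image_singleton]

end Map

/-- A rooted tree on `ℕ` with root `0`, in which every other vertex comes after its parent. -/
structure NatTree where
  parent : ℕ → ℕ
  parent_zero : parent 0 = 0
  parent_lt : ∀ n, n ≠ 0 → parent n < n

namespace NatTree

variable (T : NatTree)

def graph : SimpleGraph ℕ := SimpleGraph.fromRel fun x y => y ≠ 0 ∧ T.parent y = x

def IsAncestor (x y : ℕ) : Prop := ∃ s, T.parent^[s] y = x

def children (x : ℕ) : Set ℕ := {c | c ≠ 0 ∧ T.parent c = x}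

variable {T}

lemma parent_le (n : ℕ) : T.parent n ≤ n := by
  rcases eq_or_ne n 0 with rfl | hn
  · rw [T.parent_zero]
  · exact (T.parent_lt n hn).le

lemma graph_adj_parent {n : ℕ} (hn : n ≠ 0) : T.graph.Adj n (T.parent n) :=
  (SimpleGraph.fromRel_adj _ _ _).2 ⟨(T.parent_lt n hn).ne', Or.inr ⟨hn, rfl⟩⟩

lemma graph_adj_of_mem_children {c x : ℕ} (hc : c ∈ T.children x) : T.graph.Adj x c :=
  hc.2 ▸ (graph_adj_parent hc.1).symm

lemma lt_of_mem_children {c x : ℕ} (hc : c ∈ T.children x) : x < c :=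
  hc.2 ▸ T.parent_lt c hc.1

lemma isAncestor_refl (x : ℕ) : T.IsAncestor x x := ⟨0, rfl⟩

lemma IsAncestor.trans {x y z : ℕ} (hxy : T.IsAncestor x y) (hyz : T.IsAncestor y z) :
    T.IsAncestor x z := by
  obtain ⟨s, rfl⟩ := hxy
  obtain ⟨t, rfl⟩ := hyz
  exact ⟨s + t, Function.iterate_add_apply _ _ _ _⟩

lemma isAncestor_parent (x : ℕ) : T.IsAncestor (T.parent x) x := ⟨1, rfl⟩

lemma isAncestor_of_mem_children {c x : ℕ} (hc : c ∈ T.children x) : T.IsAncestor x c :=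
  hc.2 ▸ isAncestor_parent c

lemma IsAncestor.le {x y : ℕ} (h : T.IsAncestor x y) : x ≤ y := by
  obtain ⟨s, rfl⟩ := h
  induction s with
  | zero => rfl
  | succ s ih => exact (Function.iterate_succ_apply' _ _ _).trans_le ((parent_le _).trans ih)

lemma IsAncestor.antisymm {x y : ℕ} (hxy : T.IsAncestor x y) (hyx : T.IsAncestor y x) : x = y :=
  le_antisymm hxy.le hyx.le

lemma isAncestor_iff_eq_or_isAncestor_parent {x y : ℕ} :
    T.IsAncestor x y ↔ x = y ∨ T.IsAncestor x (T.parent y) := by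
  refine ⟨fun ⟨s, hs⟩ => ?_,
    fun h => h.elim (· ▸ isAncestor_refl x) (·.trans (isAncestor_parent y))⟩
  cases s with
  | zero => exact Or.inl hs.symm
  | succ s => exact Or.inr ⟨s, hs⟩

lemma zero_isAncestor (y : ℕ) : T.IsAncestor 0 y := by
  induction y using Nat.strong_induction_on with
  | _ y ih =>
    rcases eq_or_ne y 0 with rfl | hy
    · exact isAncestor_refl 0
    · exact (ih _ (T.parent_lt y hy)).trans (isAncestor_parent y)

lemma IsAncestor.total {x y m : ℕ} (hx : T.IsAncestor x m) (hy : T.IsAncestor y m) :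
    T.IsAncestor x y ∨ T.IsAncestor y x := by
  obtain ⟨s, rfl⟩ := hx
  obtain ⟨t, rfl⟩ := hy
  rcases le_total s t with hst | hst
  · refine Or.inr ⟨t - s, ?_⟩
    rw [← Function.iterate_add_apply, Nat.sub_add_cancel hst]
  · refine Or.inl ⟨s - t, ?_⟩
    rw [← Function.iterate_add_apply, Nat.sub_add_cancel hst]

lemma IsAncestor.exists_mem_children {x y : ℕ} (h : T.IsAncestor x y) (hne : x ≠ y) :
    ∃ c ∈ T.children x, T.IsAncestor c y := by
  induction y using Nat.strong_induction_on with
  | _ y ih =>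
    have hy : y ≠ 0 := by rintro rfl; exact hne (Nat.le_zero.1 h.le)
    obtain rfl | hxp := isAncestor_iff_eq_or_isAncestor_parent.1 h
    · exact absurd rfl hne
    rcases eq_or_ne x (T.parent y) with rfl | hne'
    · exact ⟨y, ⟨hy, rfl⟩, isAncestor_refl y⟩
    · obtain ⟨c, hc, hcy⟩ := ih _ (T.parent_lt y hy) hxp hne'
      exact ⟨c, hc, hcy.trans (isAncestor_parent y)⟩

lemma eq_of_mem_children {x c c' m : ℕ} (hc : c ∈ T.children x) (hc' : c' ∈ T.children x)
    (hcm : T.IsAncestor c m) (hc'm : T.IsAncestor c' m) : c = c' := by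
  have key : ∀ {a b}, a ∈ T.children x → b ∈ T.children x → T.IsAncestor a b → a = b := by
    intro a b ha hb hab
    refine (isAncestor_iff_eq_or_isAncestor_parent.1 hab).resolve_right fun h => ?_
    rw [hb.2] at h
    exact (lt_of_mem_children ha).not_ge h.le
  exact (hcm.total hc'm).elim (key hc hc') fun h => (key hc' hc h).symm

lemma IsAncestor.exists_isPath {x y : ℕ} (h : T.IsAncestor x y) :
    ∃ p : T.graph.Walk y x, p.IsPath ∧ walkVerts p = {z | T.IsAncestor x z ∧ T.IsAncestor z y} := by
  induction y using Nat.strong_induction_on with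
  | _ y ih =>
    rcases eq_or_ne x y with rfl | hne
    · refine ⟨.nil, .nil, ?_⟩
      ext z
      simp only [walkVerts, Walk.support_nil, List.mem_singleton, Set.mem_ofPred_eq]
      exact ⟨by rintro rfl; exact ⟨isAncestor_refl z, isAncestor_refl z⟩,
        fun hz => hz.2.antisymm hz.1⟩
    have hy : y ≠ 0 := by rintro rfl; exact hne (Nat.le_zero.1 h.le)
    have hxp := (isAncestor_iff_eq_or_isAncestor_parent.1 h).resolve_left hne
    obtain ⟨p, hp, hpv⟩ := ih _ (T.parent_lt y hy) hxp
    refine ⟨.cons (graph_adj_parent hy) p, (Walk.cons_isPath_iff _ _).2 ⟨hp, fun hyp => ?_⟩, ?_⟩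
    · have hyp' : y ∈ walkVerts p := hyp
      rw [hpv] at hyp'
      exact (T.parent_lt y hy).not_ge hyp'.2.le
    · ext z
      have hz : z ∈ walkVerts (.cons (graph_adj_parent hy) p) ↔ z = y ∨ z ∈ walkVerts p := by
        simp [walkVerts]
      have hzy : T.IsAncestor z y ↔ z = y ∨ T.IsAncestor z (T.parent y) :=
        isAncestor_iff_eq_or_isAncestor_parent
      rw [hz, hpv]
      simp only [Set.mem_ofPred_eq]
      rw [hzy]
      rcases eq_or_ne z y with rfl | hne <;> simp [h, hne]

variable {L : Set ℕ}

variable (T L) in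
def leavesBelow (x : ℕ) : Set ℕ := {m ∈ L | T.IsAncestor x m}

lemma exists_mem_children_leavesBelow_infinite {x : ℕ} (hx : (T.leavesBelow L x).Infinite)
    (hfin : {c ∈ T.children x | (T.leavesBelow L c).Nonempty}.Finite) :
    ∃ c ∈ T.children x, (T.leavesBelow L c).Infinite := by
  by_contra! h
  refine hx (((Set.finite_singleton x).union (hfin.biUnion fun c hc => h c hc.1)).subset ?_)
  intro m hm
  rcases eq_or_ne x m with rfl | hne
  · exact Or.inl rfl
  obtain ⟨c, hc, hcm⟩ := hm.2.exists_mem_children hne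
  exact Or.inr (Set.mem_biUnion ⟨hc, m, hm.1, hcm⟩ ⟨hm.1, hcm⟩)

/-- König's lemma. -/
lemma exists_ray_leavesBelow_infinite (hL : L.Infinite)
    (hfin : ∀ x, {c ∈ T.children x | (T.leavesBelow L c).Nonempty}.Finite) :
    ∃ r : ℕ → ℕ, ∀ i, r (i + 1) ∈ T.children (r i) ∧ (T.leavesBelow L (r i)).Infinite := by
  have step (x : {x // (T.leavesBelow L x).Infinite}) :
      ∃ c : {c // (T.leavesBelow L c).Infinite}, c.1 ∈ T.children x.1 := by
    obtain ⟨c, hc, hinf⟩ := exists_mem_children_leavesBelow_infinite x.2 (hfin x)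
    exact ⟨⟨c, hinf⟩, hc⟩
  choose next hnext using step
  have h0 : (T.leavesBelow L 0).Infinite := hL.mono fun m hm => ⟨hm, zero_isAncestor m⟩
  refine ⟨fun i => (next^[i] ⟨0, h0⟩).1, fun i => ⟨?_, (next^[i] ⟨0, h0⟩).2⟩⟩
  simp only [Function.iterate_succ_apply']
  exact hnext _

section Comb

variable {r : ℕ → ℕ} (hr : ∀ i, r (i + 1) ∈ T.children (r i))
include hr

lemma strictMono_of_mem_children : StrictMono r :=
  strictMono_nat_of_lt_succ fun i => lt_of_mem_children (hr i)

lemma isAncestor_of_mem_children_of_le {i j : ℕ} (hij : i ≤ j) : T.IsAncestor (r i) (r j) := by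
  induction j, hij using Nat.le_induction with
  | base => exact isAncestor_refl _
  | succ j _ ih => exact ih.trans (isAncestor_of_mem_children (hr j))

/-- A leaf lies below only finitely many vertices of the ray, so infinitely many vertices of the
ray are the last one above some leaf. -/
lemma infinite_setOf_isAncestor_not_isAncestor_succ (hne : ∀ i, (T.leavesBelow L (r i)).Nonempty) :
    {i | ∃ m ∈ L, T.IsAncestor (r i) m ∧ ¬T.IsAncestor (r (i + 1)) m}.Infinite := by
  refine Set.infinite_of_forall_exists_gt fun N => ?_
  by_contra! hN
  obtain ⟨m, hmL, hm⟩ := hne (N + 1)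
  have below (k : ℕ) : T.IsAncestor (r (N + 1 + k)) m := by
    induction k with
    | zero => exact hm
    | succ k ih =>
      by_contra h
      exact (hN _ ⟨m, hmL, ih, h⟩).not_gt (by omega)
  have := (below m).le
  have := (strictMono_of_mem_children hr).id_le (N + 1 + m)
  simp only [id] at this
  omega

lemma hasUComb_of_mem_children (hne : ∀ i, (T.leavesBelow L (r i)).Nonempty) :
    HasUComb T.graph L := by
  have hmono := strictMono_of_mem_children hr
  let e := (infinite_setOf_isAncestor_not_isAncestor_succ hr hne).natEmbedding
  choose m hmL hm hm' using fun n => (e n).2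
  choose P hP hPv using fun n => (hm n).exists_isPath
  refine ⟨r, ⟨hmono.injective, fun i => graph_adj_of_mem_children (hr i)⟩, m, fun n => r (e n),
    P, hmL, fun n => ⟨_, rfl⟩, hP, fun n => ?_, fun n n' hnn' => ?_⟩
  · refine Set.eq_singleton_iff_unique_mem.2 ⟨⟨hPv n ▸ ⟨isAncestor_refl _, hm n⟩, _, rfl⟩, ?_⟩
    rintro _ ⟨hz, j, rfl⟩
    rw [hPv n] at hz
    rcases le_or_gt j (e n) with hj | hj
    · exact hz.1.antisymm (isAncestor_of_mem_children_of_le hr hj) |>.symm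
    · exact absurd ((isAncestor_of_mem_children_of_le hr hj).trans hz.2) (hm' n)
  · have hexit {k k' : ℕ} (hk : (e k : ℕ) < e k') :
        Disjoint (walkVerts (P k)) (walkVerts (P k')) := by
      rw [hPv, hPv, Set.disjoint_left]
      rintro z ⟨-, hzk⟩ ⟨hz, -⟩
      exact hm' k ((isAncestor_of_mem_children_of_le hr hk).trans (hz.trans hzk))
    have : (e n : ℕ) ≠ e n' := fun h => hnn' (e.injective (Subtype.ext h))
    rcases this.lt_or_gt with h | h
    · exact hexit h
    · exact (hexit h).symm

end Comb

lemma hasTwoStar_of_infinite {x : ℕ}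
    (hx : {c ∈ T.children x | ∃ m ∈ L, T.IsAncestor c m ∧ c ≠ m}.Infinite) :
    HasTwoStar T.graph L := by
  let e := hx.natEmbedding
  have hc (n : ℕ) : (e n : ℕ) ∈ T.children x := (e n).2.1
  choose m hmL hm hm' using fun n => (e n).2.2
  have hxm (n : ℕ) : T.IsAncestor x (m n) := (isAncestor_of_mem_children (hc n)).trans (hm n)
  have hxc (n : ℕ) : x < e n := lt_of_mem_children (hc n)
  choose P hP hPv using fun n => (hxm n).exists_isPath
  have index_eq (n n' : ℕ) (c : ℕ) (hc' : c ∈ T.children x) (h : T.IsAncestor c (m n))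
      (h' : T.IsAncestor c (m n')) : n = n' := by
    have h1 := eq_of_mem_children hc' (hc n) h (hm n)
    have h2 := eq_of_mem_children hc' (hc n') h' (hm n')
    exact e.injective (Subtype.ext (h1.symm.trans h2))
  refine ⟨x, m, fun n => (P n).reverse, fun n n' h => index_eq n n' _ (hc n) (hm n) (h ▸ hm n),
    hmL, fun n => (hP n).reverse, fun n => (P n).reverse.two_le_length ?_ ?_,
    fun n n' hnn' => ?_⟩
  · exact ((hxc n).trans_le (hm n).le).ne
  · rw [NatTree.graph, SimpleGraph.fromRel_adj]
    rintro ⟨-, ⟨-, hpx⟩ | ⟨-, hpm⟩⟩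
    · have := (isAncestor_iff_eq_or_isAncestor_parent.1 (hm n)).resolve_left (hm' n)
      exact (hxc n).not_ge (hpx ▸ this.le)
    · exact ((hxc n).trans_le (hm n).le).not_ge (hpm ▸ T.parent_le x)
  · refine Set.eq_singleton_iff_unique_mem.2 ⟨?_, ?_⟩
    · simp only [walkVerts_reverse, hPv]
      exact ⟨⟨isAncestor_refl x, hxm n⟩, ⟨isAncestor_refl x, hxm n'⟩⟩
    · rintro z ⟨hz, hz'⟩
      simp only [walkVerts_reverse, hPv] at hz hz'
      by_contra hzx
      obtain ⟨c, hc', hcz⟩ := hz.1.exists_mem_children (Ne.symm hzx)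
      exact hnn' (index_eq n n' c hc' (hcz.trans hz.2) (hcz.trans hz'.2))

theorem hasUComb_or_hasTwoStar (hL : L.Infinite) (hinj : Set.InjOn T.parent L) :
    HasUComb T.graph L ∨ HasTwoStar T.graph L := by
  by_cases h : ∃ x, {c ∈ T.children x | ∃ m ∈ L, T.IsAncestor c m ∧ c ≠ m}.Infinite
  · obtain ⟨x, hx⟩ := h
    exact Or.inr (hasTwoStar_of_infinite hx)
  simp only [not_exists, Set.not_infinite] at h
  have hfin (x : ℕ) : {c ∈ T.children x | (T.leavesBelow L c).Nonempty}.Finite := by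
    have hleaf : {c ∈ L | T.parent c = x}.Subsingleton :=
      fun a ha b hb => hinj ha.1 hb.1 (ha.2.trans hb.2.symm)
    refine ((h x).union hleaf.finite).subset ?_
    rintro c ⟨hc, m, hmL, hcm⟩
    rcases eq_or_ne c m with rfl | hne
    · exact Or.inr ⟨hmL, hc.2⟩
    · exact Or.inl ⟨hc, m, hmL, hcm, hne⟩
  obtain ⟨r, hr⟩ := exists_ray_leavesBelow_infinite hL hfin
  exact Or.inl (hasUComb_of_mem_children (fun i => (hr i).1) fun i => (hr i).2.nonempty)

end NatTree

section Construction

variable {α : Type*} {G : SimpleGraph α} {U : Set α}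

variable (G U) in
/-- `xs` lists the vertices still to be added of a path from `a` to `U` avoiding the vertices
`h` added so far. -/
structure IsPending (h : List α) (a : α) (xs : List α) : Prop where
  nodup : xs.Nodup
  disjoint : ∀ y ∈ xs, y ∉ h
  isChain : (a :: xs).IsChain G.Adj
  getLast_mem : ∀ y ∈ xs.getLast?, y ∈ U

lemma IsPending.pop {h : List α} {a x : α} {l : List α} (hp : IsPending G U h a (x :: l)) :
    IsPending G U (h ++ [x]) x l where
  nodup := (List.nodup_cons.1 hp.nodup).2
  disjoint y hy := by
    simp only [List.mem_append, List.mem_singleton, not_or]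
    exact ⟨hp.disjoint y (.tail _ hy), ne_of_mem_of_not_mem hy (List.nodup_cons.1 hp.nodup).1⟩
  isChain := (List.isChain_cons_cons.1 hp.isChain).2
  getLast_mem y hy := hp.getLast_mem y <| by
    cases l with
    | nil => simp at hy
    | cons => rwa [List.getLast?_cons_cons]

variable (G U) in
/-- A branch to be added to the tree on the vertices `h`: the index in `h` of its first vertex,
followed by its other vertices. -/
def IsBranch (h : List α) (b : ℕ × α × List α) : Prop :=
  ∃ a, h[b.1]? = some a ∧ IsPending G U h a (b.2.1 :: b.2.2)

/-- Since `h` does not dominate `U`, the last exit from `h` of a path to an undominated vertex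
of `U` starts a branch of length at least 2. -/
lemma exists_isBranch (hG : G.Connected) {h : List α} (hh : h ≠ [])
    (hdom : ¬Dominates G {y | y ∈ h} U) : ∃ b, b.2.2 ≠ [] ∧ IsBranch G U h b := by
  classical
  simp only [Dominates, not_forall, not_or, not_exists, not_and] at hdom
  obtain ⟨u, huU, huh, hadj⟩ := hdom
  obtain ⟨v, hv⟩ := List.exists_mem_of_ne_nil h hh
  obtain ⟨a, ha, q, hq, hqh⟩ := (hG.preconnected v u).some.toPath.2.exists_isPath_tail_disjoint
    (S := {y | y ∈ h}) huh ⟨v, Walk.start_mem_support _, hv⟩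
  have hlen := q.two_le_length (ne_of_mem_of_not_mem ha huh) (hadj a ha)
  cases q with
  | nil => simp at hlen
  | @cons _ x _ hax q =>
    refine ⟨(h.idxOf a, x, q.support.tail), ?_, a, List.getElem?_idxOf ha, ?_⟩
    · cases q with
      | nil => simp at hlen
      | cons => simp
    rw [Walk.cons_tail_support]
    rw [Walk.support_cons, List.tail_cons] at hqh
    refine ⟨hq.support_nodup.sublist (List.sublist_cons_self _ _), hqh, ?_, ?_⟩
    · simpa using (Walk.cons hax q).isChain_adj_support
    · simp [List.getLast?_eq_some_getLast q.support_ne_nil, huU]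

section Growth

variable (r : α) (next : List α → ℕ × α × List α)

/-- Extends the tree by one vertex: the next vertex of the current branch, or, when the branch is
finished, the first vertex of a new one. -/
def advance (s : List α × List α) : ℕ × α × List α :=
  match s.2 with
  | x :: l => (s.1.length - 1, x, l)
  | [] => next s.1

/-- The vertices of the tree added so far, and the vertices still to be added of the current
branch. -/
def growth : ℕ → List α × List α
  | 0 => ([r], [])
  | n + 1 => ((growth n).1 ++ [(advance next (growth n)).2.1], (advance next (growth n)).2.2)

def growthVertex : ℕ → α
  | 0 => r
  | n + 1 => (advance next (growth r next n)).2.1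

def growthParent : ℕ → ℕ
  | 0 => 0
  | n + 1 => (advance next (growth r next n)).1

lemma growth_eq_nil_of_length (k : ℕ) :
    ∀ n, (growth r next n).2.length = k → (growth r next (n + k)).2 = [] := by
  induction k with
  | zero => exact fun n => List.eq_nil_of_length_eq_zero
  | succ k ih =>
    intro n hn
    obtain ⟨x, l, hxl⟩ := List.exists_cons_of_length_eq_add_one hn
    have : (growth r next (n + 1)).2 = l := by simp only [growth, advance, hxl]
    rw [show n + (k + 1) = n + 1 + k by omega]
    exact ih (n + 1) (by simpa [this, hxl] using hn)

lemma infinite_setOf_growth_eq_nil : {n | n ≠ 0 ∧ (growth r next n).2 = []}.Infinite :=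
  Set.infinite_of_forall_exists_gt fun N =>
    ⟨_, ⟨by omega, growth_eq_nil_of_length r next _ (N + 1) rfl⟩, by omega⟩

variable {next} (hnext : ∀ h, h ≠ [] → (next h).2.2 ≠ [] ∧ IsBranch G U h (next h))
include hnext

omit r in
lemma advance_spec {s : List α × List α} {a : α} (ha : s.1.getLast? = some a)
    (hp : IsPending G U s.1 a s.2) :
    IsBranch G U s.1 (advance next s) ∧
      ((advance next s).2.2 = [] → (advance next s).1 = s.1.length - 1) := by
  obtain ⟨h, xs⟩ := s
  cases xs with
  | nil =>
    obtain ⟨hne, hb⟩ := hnext h (by rintro rfl; simp at ha)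
    exact ⟨hb, fun h' => absurd h' hne⟩
  | cons x l => exact ⟨⟨a, List.getLast?_eq_getElem? ▸ ha, hp⟩, fun _ => rfl⟩

lemma growth_spec (n : ℕ) :
    (growth r next n).1 = (List.range (n + 1)).map (growthVertex r next) ∧
      (growth r next n).1.Nodup ∧
      IsPending G U (growth r next n).1 (growthVertex r next n) (growth r next n).2 := by
  induction n with
  | zero =>
    exact ⟨rfl, List.nodup_singleton r,
      ⟨List.nodup_nil, by simp [growth], List.isChain_singleton r, by simp [growth]⟩⟩
  | succ n ih =>
    obtain ⟨hmap, hnd, hp⟩ := ih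
    obtain ⟨a, -, hb⟩ := (advance_spec hnext (by simp [hmap, List.getLast?_range]) hp).1
    refine ⟨?_, ?_, hb.pop⟩
    · rw [growth, hmap, List.range_succ (n := n + 1), List.map_append]
      rfl
    · refine List.nodup_append.2 ⟨hnd, List.nodup_singleton _, fun y hy z hz => ?_⟩
      exact ne_of_mem_of_not_mem hy (List.mem_singleton.1 hz ▸ hb.disjoint _ (.head _))

lemma growth_succ_spec (n : ℕ) :
    growthParent r next (n + 1) < n + 1 ∧
      IsPending G U (growth r next n).1 (growthVertex r next (growthParent r next (n + 1)))
        (growthVertex r next (n + 1) :: (growth r next (n + 1)).2) ∧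
      ((growth r next (n + 1)).2 = [] → growthParent r next (n + 1) = n) := by
  obtain ⟨hmap, -, hp⟩ := growth_spec r hnext n
  obtain ⟨⟨a, ha, hb⟩, hlast⟩ := advance_spec hnext (by simp [hmap, List.getLast?_range]) hp
  have hidx : ((List.range (n + 1)).map (growthVertex r next))[growthParent r next (n + 1)]? =
      some a := by
    rw [← hmap]
    exact ha
  simp only [List.getElem?_eq_some_iff, List.length_map, List.length_range, List.getElem_map,
    List.getElem_range] at hidx
  obtain ⟨hlt, rfl⟩ := hidx
  refine ⟨hlt, hb, fun hnil => ?_⟩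
  exact (by simpa [hmap] using hlast hnil : (advance next (growth r next n)).1 = n)

lemma growthVertex_injective : Function.Injective (growthVertex r next) := by
  intro m n hmn
  have hnd := (growth_spec r hnext (max m n)).2.1
  rw [(growth_spec r hnext (max m n)).1] at hnd
  exact List.inj_on_of_nodup_map hnd (by simp only [List.mem_range]; omega)
    (by simp only [List.mem_range]; omega) hmn

lemma adj_growthVertex_growthParent {n : ℕ} (hn : n ≠ 0) :
    G.Adj (growthVertex r next (growthParent r next n)) (growthVertex r next n) := by
  obtain ⟨n, rfl⟩ := Nat.exists_eq_succ_of_ne_zero hn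
  exact (List.isChain_cons_cons.1 (growth_succ_spec r hnext n).2.1.isChain).1

end Growth

variable (G U) in
theorem exists_natTree_hom (hG : G.Connected) (hdom : ∀ D : Set α, D.Finite → ¬Dominates G D U) :
    ∃ (T : NatTree) (f : T.graph →g G) (L : Set ℕ), Function.Injective f ∧ L.Infinite ∧
      Set.InjOn T.parent L ∧ Set.MapsTo f L U := by
  obtain ⟨r⟩ := hG.nonempty
  have : Nonempty α := ⟨r⟩
  choose! next hnext using fun h (hh : h ≠ []) => exists_isBranch hG hh (hdom _ h.finite_toSet)
  have hlt (n : ℕ) (hn : n ≠ 0) : growthParent r next n < n := by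
    obtain ⟨n, rfl⟩ := Nat.exists_eq_succ_of_ne_zero hn
    exact (growth_succ_spec r hnext n).1
  let T : NatTree := ⟨growthParent r next, rfl, hlt⟩
  let f : T.graph →g G := ⟨growthVertex r next, fun {m n} hmn => by
    rcases (SimpleGraph.fromRel_adj _ _ _).1 hmn with ⟨-, ⟨hn, rfl⟩ | ⟨hm, rfl⟩⟩
    · exact adj_growthVertex_growthParent r hnext hn
    · exact (adj_growthVertex_growthParent r hnext hm).symm⟩
  have hleaf {n : ℕ} (hn : n ∈ {n | n ≠ 0 ∧ (growth r next n).2 = []}) :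
      growthParent r next n = n - 1 ∧ growthVertex r next n ∈ U := by
    obtain ⟨k, rfl⟩ := Nat.exists_eq_succ_of_ne_zero hn.1
    have hp := (growth_succ_spec r hnext k).2
    exact ⟨hp.2 hn.2, hp.1.getLast_mem _ (by simp [hn.2])⟩
  refine ⟨T, f, {n | n ≠ 0 ∧ (growth r next n).2 = []}, growthVertex_injective r hnext,
    infinite_setOf_growth_eq_nil r next, fun m hm n hn hmn => ?_, fun n hn => (hleaf hn).2⟩
  have := (hleaf hm).1.symm.trans (hmn.trans (hleaf hn).1)
  have := hm.1
  have := hn.1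
  omega

end Construction

theorem comb_twoStar_or_dominating_general {α : Type} (G : SimpleGraph α)
    (hG : G.Connected) (U : Set α) :
    HasUComb G U ∨ HasTwoStar G U ∨ ∃ D : Set α, D.Finite ∧ Dominates G D U := by
  by_cases hdom : ∃ D : Set α, D.Finite ∧ Dominates G D U
  · exact Or.inr (Or.inr hdom)
  push Not at hdom
  obtain ⟨T, f, L, hf, hL, hinj, hLU⟩ := exists_natTree_hom G U hG hdom
  rcases T.hasUComb_or_hasTwoStar hL hinj with h | h
  · exact Or.inl (h.map hf hLU)
  · exact Or.inr (Or.inl (h.map hf hLU))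

/-- Let `G` be a connected countable graph and `U ⊆ V(G)` infinite. Then `G`
contains a `U`-comb, or a 2-star with all leaves in `U`, or a finite vertex set
dominating `U`. -/
theorem comb_twoStar_or_dominating {α : Type} [Countable α] (G : SimpleGraph α)
    (hG : G.Connected) (U : Set α) (hU : U.Infinite) :
    HasUComb G U ∨ HasTwoStar G U ∨ ∃ D : Set α, D.Finite ∧ Dominates G D U :=
  comb_twoStar_or_dominating_general G hG U
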